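/- The Boolean-to-c-free Bercovici-Pata bijection BP is a homomorphism with respect to multiplicative c-free convolution: for compactly supported pairs (μ₁,ν₁), (μ₂,ν₂) (second coordinates with nonzero means), BP((μ₁,ν₁) ⊠_c (μ₂,ν₂)) = BP(μ₁,ν₁) ⊠_c BP(μ₂,ν₂). -/

import Mathlib

open MeasureTheory

/-- `M_σ(z) = ∫ (1-tz)⁻¹ dσ(t)`. -/
noncomputable def momGen (σ : Measure ℝ) (z : ℂ) : ℂ :=
  ∫ t : ℝ, ((1 : ℂ) - (t : ℂ) * z)⁻¹ ∂σ

/-- `M̃_σ = M_σ - 1`. -/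
noncomputable def momGenT (σ : Measure ℝ) (z : ℂ) : ℂ := momGen σ z - 1

/-- Boolean transform `B_σ(z) = 1 - M_σ(z)⁻¹`. -/
noncomputable def boolT (σ : Measure ℝ) (z : ℂ) : ℂ := 1 - (momGen σ z)⁻¹

/-- A compactly supported probability measure. -/
def Good (σ : Measure ℝ) : Prop :=
  IsProbabilityMeasure σ ∧ ∃ R : ℝ, σ (Set.Icc (-R) R)ᶜ = 0

/-- Equality of analytic germs at `0`. -/
def EqGerm (f g : ℂ → ℂ) : Prop := ∃ ε : ℝ, 0 < ε ∧ ∀ z : ℂ, ‖z‖ < ε → f z = g z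

/-- c-free T-transform `ᶜT(z) = ᶜR(R_ν⁻¹(z))/R_ν⁻¹(z)`. -/
noncomputable def cT (cR Rinv : ℂ → ℂ) : ℂ → ℂ := fun z => cR (Rinv z) / Rinv z

/-- T-transform of the second coordinate, `T_ν(z) = z/R_ν⁻¹(z)`. -/
noncomputable def fT (Rinv : ℂ → ℂ) : ℂ → ℂ := fun z => z / Rinv z

/-- `R`, `Rinv`, `cR` are the free R-transform of `ν` (with its local compositional inverse)
and the c-free R-transform of the pair `(μ,ν)`, as analytic germs at `0`. -/
def TransformData (μ ν : Measure ℝ) (R Rinv cR : ℂ → ℂ) : Prop :=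
  ∃ δ : ℝ, 0 < δ ∧ ∀ z : ℂ, ‖z‖ < δ →
    momGenT ν z = R (z + z * momGenT ν z) ∧
    Rinv (R z) = z ∧ R (Rinv z) = z ∧
    (momGen μ z - 1) * momGen ν z = momGen μ z * cR (z * momGen ν z)

/-- The pair with transforms `(cR₃,Rinv₃)` is the multiplicative c-free convolution of the
pairs with transforms `(cR₁,Rinv₁)` and `(cR₂,Rinv₂)`: both the `ᶜT`- and `T`-transforms
multiply. -/
def IsCProd (cR₁ Rinv₁ cR₂ Rinv₂ cR₃ Rinv₃ : ℂ → ℂ) : Prop :=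
  EqGerm (cT cR₃ Rinv₃) (fun z => cT cR₁ Rinv₁ z * cT cR₂ Rinv₂ z) ∧
  EqGerm (fT Rinv₃) (fun z => fT Rinv₁ z * fT Rinv₂ z)

/-- `(μ',ν')` (with c-free R-transform `cR'` and free R-transform `R'`) is the
Boolean-to-c-free Bercovici–Pata image of `(μ,ν)`: `ᶜR_{μ',ν'} = B_μ`, `R_{ν'} = B_ν`. -/
def IsBP (μ ν : Measure ℝ) (cR' R' : ℂ → ℂ) : Prop :=
  EqGerm cR' (boolT μ) ∧ EqGerm R' (boolT ν)

/-!
Near `0` both transforms of a pair are read off its Boolean transforms along `y = M̃_ν(z)`: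
`T_ν(M̃_ν(z)) = B_ν(z)/z` and `ᶜT(M̃_ν(z)) = B_μ(z)/z`. For the BP image the same identities
hold along `y = B_ν(w)`, and `B_ν(w) = y` exactly when `M̃_ν(w) = y/(1-y)`; hence
`ᶜT_{BP(μ,ν)}(y) = ᶜT_{(μ,ν)}(y/(1-y))` and likewise for `T`, so multiplicativity transfers
from the pairs to their images. Conversely the transform germs determine the pair: `T` fixes
`R_ν⁻¹`, hence `M_ν` (inverting `M̃_ν`, whose derivative at `0` is the nonzero mean), then `ᶜT`
fixes `B_μ`; and `M_σ` is the generating function of the moments of `σ`, which determine a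
compactly supported measure.
-/

open Filter Topology
open scoped NNReal

section Moments

variable {ρ σ τ : Measure ℝ}

lemma Good.exists_ae_abs_le (h : Good ρ) : ∃ R : ℝ≥0, 0 < R ∧ ∀ᵐ t ∂ρ, |t| ≤ (R : ℝ) := by
  obtain ⟨-, R, hR⟩ := h
  refine ⟨(max R 1).toNNReal, by simp, ?_⟩
  filter_upwards [mem_ae_iff.2 hR] with t ht
  rw [Real.coe_toNNReal _ (by positivity)]
  exact (abs_le.2 ht).trans (le_max_left R 1)

lemma Good.integrable_of_continuous {f : ℝ → ℝ} (hρ : Good ρ) (hf : Continuous f) :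
    Integrable f ρ := by
  obtain ⟨_, R, hR⟩ := hρ
  rw [← Measure.restrict_eq_self_of_ae_mem (mem_ae_iff.2 hR)]
  exact hf.continuousOn.integrableOn_compact isCompact_Icc

lemma norm_integral_pow_le [IsProbabilityMeasure ρ] {R : ℝ} (hρ : ∀ᵐ t ∂ρ, |t| ≤ R) (n : ℕ) :
    ‖∫ t, t ^ n ∂ρ‖ ≤ R ^ n := by
  simpa using norm_integral_le_of_norm_le_const (μ := ρ) (f := fun t => t ^ n) (C := R ^ n)
    (by filter_upwards [hρ] with t ht; simpa using pow_le_pow_left₀ (abs_nonneg t) ht n)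

noncomputable def momentSeries (ρ : Measure ℝ) : FormalMultilinearSeries ℂ ℂ ℂ :=
  FormalMultilinearSeries.ofScalars ℂ fun n => ((∫ t, t ^ n ∂ρ : ℝ) : ℂ)

lemma momentSeries_apply (ρ : Measure ℝ) (n : ℕ) (z : ℂ) :
    momentSeries ρ n (fun _ => z) = ((∫ t, t ^ n ∂ρ : ℝ) : ℂ) * z ^ n := by
  rw [momentSeries, FormalMultilinearSeries.ofScalars_apply_eq, smul_eq_mul]

lemma integral_ofReal_mul_pow (ρ : Measure ℝ) (z : ℂ) (n : ℕ) :
    ∫ t : ℝ, ((t : ℂ) * z) ^ n ∂ρ = ((∫ t, t ^ n ∂ρ : ℝ) : ℂ) * z ^ n := by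
  simp_rw [mul_pow, integral_mul_const, ← Complex.ofReal_pow, integral_complex_ofReal]

lemma hasFPowerSeriesOnBall_momGen [IsProbabilityMeasure ρ] {R : ℝ≥0} (hR : 0 < R)
    (hρ : ∀ᵐ t ∂ρ, |t| ≤ (R : ℝ)) :
    HasFPowerSeriesOnBall (momGen ρ) (momentSeries ρ) 0 (R⁻¹ : ℝ≥0) where
  r_le := (momentSeries ρ).le_radius_of_bound 1 fun n => by
    rw [momentSeries, FormalMultilinearSeries.ofScalars_norm, Complex.norm_real]
    calc ‖∫ t, t ^ n ∂ρ‖ * ((R⁻¹ : ℝ≥0) : ℝ) ^ n ≤ (R : ℝ) ^ n * ((R : ℝ)⁻¹) ^ n := by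
          gcongr
          · exact norm_integral_pow_le hρ n
          · simp
      _ = 1 := by rw [← mul_pow, mul_inv_cancel₀ (by positivity), one_pow]
  r_pos := by simpa using hR
  hasSum {z} hz := by
    rw [mem_eball_zero_iff] at hz
    have hRz : (R : ℝ) * ‖z‖ < 1 := by
      have := (NNReal.lt_inv_iff_mul_lt hR.ne').1 (ENNReal.coe_lt_coe.1 hz)
      rw [mul_comm] at this
      exact_mod_cast this
    simp_rw [zero_add, momentSeries_apply, ← integral_ofReal_mul_pow]
    refine hasSum_integral_of_dominated_convergence (fun n _ => ((R : ℝ) * ‖z‖) ^ n)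
      (fun n => by fun_prop) (fun n => ?_) (ae_of_all _ fun _ => ?_) (integrable_const _) ?_
    · filter_upwards [hρ] with t ht
      rw [norm_pow, norm_mul, Complex.norm_real]
      gcongr
      exact ht
    · exact summable_geometric_of_lt_one (by positivity) hRz
    · filter_upwards [hρ] with t ht
      refine hasSum_geometric_of_norm_lt_one ?_
      rw [norm_mul, Complex.norm_real]
      exact lt_of_le_of_lt (by gcongr; exact ht) hRz

lemma Good.hasFPowerSeriesAt_momGen (hρ : Good ρ) :
    HasFPowerSeriesAt (momGen ρ) (momentSeries ρ) 0 := by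
  have := hρ.1
  obtain ⟨R, hR, hρR⟩ := hρ.exists_ae_abs_le
  exact (hasFPowerSeriesOnBall_momGen hR hρR).hasFPowerSeriesAt

lemma momGen_zero [IsProbabilityMeasure ρ] : momGen ρ 0 = 1 := by
  simp [momGen]

lemma Good.continuousAt_momGen (hρ : Good ρ) : ContinuousAt (momGen ρ) 0 :=
  hρ.hasFPowerSeriesAt_momGen.continuousAt

lemma Good.hasStrictDerivAt_momGen (hρ : Good ρ) :
    HasStrictDerivAt (momGen ρ) ((∫ t, t ∂ρ : ℝ) : ℂ) 0 := by
  have h := hρ.hasFPowerSeriesAt_momGen.hasStrictDerivAt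
  simpa only [momentSeries_apply, one_pow, mul_one, pow_one] using h

lemma Good.eventually_momGen_ne_zero (hρ : Good ρ) : ∀ᶠ z in 𝓝 0, momGen ρ z ≠ 0 := by
  have := hρ.1
  exact hρ.continuousAt_momGen.eventually_ne (by simp [momGen_zero])

lemma Good.integral_pow_eq_of_momGen_eventuallyEq (hσ : Good σ) (hτ : Good τ)
    (h : momGen σ =ᶠ[𝓝 0] momGen τ) (n : ℕ) : ∫ t, t ^ n ∂σ = ∫ t, t ^ n ∂τ := by
  have := hσ.hasFPowerSeriesAt_momGen.eq_formalMultilinearSeries_of_eventually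
    hτ.hasFPowerSeriesAt_momGen h
  have hn := congr($this n fun _ => 1)
  rwa [momentSeries_apply, momentSeries_apply, one_pow, mul_one, mul_one,
    Complex.ofReal_inj] at hn

lemma Good.integral_eval_eq_of_integral_pow_eq (hσ : Good σ) (hτ : Good τ)
    (h : ∀ n : ℕ, ∫ t, t ^ n ∂σ = ∫ t, t ^ n ∂τ) (q : Polynomial ℝ) :
    ∫ t, q.eval t ∂σ = ∫ t, q.eval t ∂τ := by
  induction q using Polynomial.induction_on' with
  | add p q hp hq =>
    simp only [Polynomial.eval_add]
    rw [integral_add (hσ.integrable_of_continuous p.continuous)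
        (hσ.integrable_of_continuous q.continuous),
      integral_add (hτ.integrable_of_continuous p.continuous)
        (hτ.integrable_of_continuous q.continuous), hp, hq]
  | monomial n a => simp [integral_const_mul, h n]

lemma dist_integral_le_of_ae_abs_sub_le [IsProbabilityMeasure ρ] {f g : ℝ → ℝ}
    (hf : Integrable f ρ) (hg : Integrable g ρ) {ε : ℝ} (h : ∀ᵐ t ∂ρ, |f t - g t| ≤ ε) :
    dist (∫ t, f t ∂ρ) (∫ t, g t ∂ρ) ≤ ε := by
  rw [dist_eq_norm, ← integral_sub hf hg]
  simpa using norm_integral_le_of_norm_le_const (μ := ρ) (f := fun t => f t - g t) h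

lemma Good.ext_of_integral_pow_eq (hσ : Good σ) (hτ : Good τ)
    (h : ∀ n : ℕ, ∫ t, t ^ n ∂σ = ∫ t, t ^ n ∂τ) : σ = τ := by
  have := hσ.1; have := hτ.1
  obtain ⟨Rσ, -, hRσ⟩ := hσ.exists_ae_abs_le
  obtain ⟨Rτ, -, hRτ⟩ := hτ.exists_ae_abs_le
  set R : ℝ := max Rσ Rτ
  refine ext_of_forall_integral_eq_of_IsFiniteMeasure fun f => eq_of_forall_dist_le fun ε hε => ?_
  obtain ⟨q, hq⟩ := exists_polynomial_near_of_continuousOn (-R) R f f.continuous.continuousOn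
    (ε / 2) (half_pos hε)
  have approx : ∀ ρ : Measure ℝ, Good ρ → (∀ᵐ t ∂ρ, |t| ≤ R) →
      dist (∫ t, f t ∂ρ) (∫ t, q.eval t ∂ρ) ≤ ε / 2 := fun ρ hρ hρR => by
    have := hρ.1
    refine dist_integral_le_of_ae_abs_sub_le (hρ.integrable_of_continuous f.continuous)
      (hρ.integrable_of_continuous q.continuous) ?_
    filter_upwards [hρR] with t ht
    rw [abs_sub_comm]
    exact (hq t (abs_le.1 ht)).le
  calc dist (∫ t, f t ∂σ) (∫ t, f t ∂τ)
      ≤ dist (∫ t, f t ∂σ) (∫ t, q.eval t ∂σ) + dist (∫ t, f t ∂τ) (∫ t, q.eval t ∂τ) := by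
        rw [hσ.integral_eval_eq_of_integral_pow_eq hτ h, dist_comm (∫ t, f t ∂τ)]
        exact dist_triangle _ _ _
    _ ≤ ε / 2 + ε / 2 := by
        gcongr
        · exact approx σ hσ (hRσ.mono fun t ht => ht.trans (le_max_left _ _))
        · exact approx τ hτ (hRτ.mono fun t ht => ht.trans (le_max_right _ _))
    _ = ε := add_halves ε

lemma Good.ext_of_momGen_eventuallyEq (hσ : Good σ) (hτ : Good τ)
    (h : momGen σ =ᶠ[𝓝 0] momGen τ) : σ = τ :=
  hσ.ext_of_integral_pow_eq hτ (hσ.integral_pow_eq_of_momGen_eventuallyEq hτ h)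

end Moments

section Transforms

variable {ρ μ ν : Measure ℝ} {f g R Rinv cR : ℂ → ℂ}

lemma momGenT_zero [IsProbabilityMeasure ρ] : momGenT ρ 0 = 0 := by
  simp [momGenT, momGen_zero]

lemma boolT_eq_momGenT_div {z : ℂ} (h : momGen ρ z ≠ 0) :
    boolT ρ z = momGenT ρ z / momGen ρ z := by
  rw [boolT, momGenT]
  field_simp

lemma boolT_zero [IsProbabilityMeasure ρ] : boolT ρ 0 = 0 := by
  simp [boolT, momGen_zero]

lemma Good.tendsto_momGenT (hρ : Good ρ) : Tendsto (momGenT ρ) (𝓝 0) (𝓝 0) := by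
  have := hρ.1
  have h := hρ.continuousAt_momGen.tendsto.sub_const 1
  rwa [momGen_zero, sub_self] at h

lemma Good.tendsto_mul_momGen (hρ : Good ρ) :
    Tendsto (fun z => z * momGen ρ z) (𝓝 0) (𝓝 0) := by
  simpa using tendsto_id.mul hρ.continuousAt_momGen.tendsto

lemma Good.map_momGenT_nhds (hρ : Good ρ) (hm : ∫ t, t ∂ρ ≠ 0) :
    map (momGenT ρ) (𝓝 0) = 𝓝 0 := by
  have := hρ.1
  have hT : HasStrictDerivAt (momGenT ρ) ((∫ t, t ∂ρ : ℝ) : ℂ) 0 :=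
    hρ.hasStrictDerivAt_momGen.sub_const 1
  rw [hT.map_nhds_eq (by exact_mod_cast hm), momGenT_zero]

lemma Good.map_boolT_nhds (hρ : Good ρ) (hm : ∫ t, t ∂ρ ≠ 0) :
    map (boolT ρ) (𝓝 0) = 𝓝 0 := by
  have := hρ.1
  have hB : HasStrictDerivAt (boolT ρ) ((∫ t, t ∂ρ : ℝ) : ℂ) 0 := by
    have h := ((hasStrictDerivAt_inv (by simp [momGen_zero])).comp 0
      hρ.hasStrictDerivAt_momGen).const_sub 1
    simp only [momGen_zero, one_pow, inv_one, neg_mul, one_mul, neg_neg] at h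
    exact h
  rw [hB.map_nhds_eq (by exact_mod_cast hm), boolT_zero]

lemma EqGerm.eventuallyEq (h : EqGerm f g) : f =ᶠ[𝓝 0] g := by
  obtain ⟨ε, hε, h⟩ := h
  exact Metric.eventually_nhds_iff.2 ⟨ε, hε, fun z hz => h z (by simpa using hz)⟩

lemma TransformData.eventually (hT : TransformData μ ν R Rinv cR) :
    ∀ᶠ z in 𝓝 0, momGenT ν z = R (z + z * momGenT ν z) ∧
      Rinv (R z) = z ∧ R (Rinv z) = z ∧
      (momGen μ z - 1) * momGen ν z = momGen μ z * cR (z * momGen ν z) := by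
  obtain ⟨δ, hδ, h⟩ := hT
  exact Metric.eventually_nhds_iff.2 ⟨δ, hδ, fun z hz => h z (by simpa using hz)⟩

lemma TransformData.rinv_apply (hT : TransformData μ ν R Rinv cR) :
    ∀ᶠ w in 𝓝 0, Rinv (R w) = w :=
  hT.eventually.mono fun _ h => h.2.1

lemma TransformData.rinv_apply_momGenT (hν : Good ν) (hT : TransformData μ ν R Rinv cR) :
    ∀ᶠ z in 𝓝 0, Rinv (momGenT ν z) = z * momGen ν z := by
  filter_upwards [hT.eventually, hν.tendsto_mul_momGen.eventually hT.rinv_apply] with z hz hw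
  rwa [hz.1, show z + z * momGenT ν z = z * momGen ν z by rw [momGenT]; ring]

lemma TransformData.rinv_zero (hν : Good ν) (hT : TransformData μ ν R Rinv cR) : Rinv 0 = 0 := by
  have := hν.1
  simpa [momGenT_zero] using (hT.rinv_apply_momGenT hν).self_of_nhds

lemma TransformData.cR_apply (hμ : Good μ) (hT : TransformData μ ν R Rinv cR) :
    ∀ᶠ z in 𝓝 0, cR (z * momGen ν z) = boolT μ z * momGen ν z := by
  filter_upwards [hT.eventually, hμ.eventually_momGen_ne_zero] with z hz hM
  rw [boolT]
  field_simp
  linear_combination -hz.2.2.2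

lemma TransformData.fT_apply_momGenT (hν : Good ν) (hT : TransformData μ ν R Rinv cR) :
    ∀ᶠ z in 𝓝 0, fT Rinv (momGenT ν z) = boolT ν z / z := by
  filter_upwards [hT.rinv_apply_momGenT hν, hν.eventually_momGen_ne_zero] with z hz hM
  rw [fT, hz, boolT_eq_momGenT_div hM, div_div, mul_comm]

lemma TransformData.cT_apply_momGenT (hμ : Good μ) (hν : Good ν)
    (hT : TransformData μ ν R Rinv cR) :
    ∀ᶠ z in 𝓝 0, cT cR Rinv (momGenT ν z) = boolT μ z / z := by
  filter_upwards [hT.rinv_apply_momGenT hν, hT.cR_apply hμ, hν.eventually_momGen_ne_zero]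
    with z hz hcR hM
  rw [cT, hz, hcR, mul_div_mul_right _ _ hM]

end Transforms

section BercoviciPata

variable {μ ν μ' ν' : Measure ℝ} {R Rinv cR R' Rinv' cR' : ℂ → ℂ}

lemma IsBP.eventually_transforms_eq (hBP : IsBP μ ν cR' R') (hμ : Good μ) (hν : Good ν)
    (hm : ∫ t, t ∂ν ≠ 0) (hT : TransformData μ ν R Rinv cR)
    (hT' : TransformData μ' ν' R' Rinv' cR') :
    ∀ᶠ y in 𝓝 0, fT Rinv' y = fT Rinv (y / (1 - y)) ∧
      cT cR' Rinv' y = cT cR Rinv (y / (1 - y)) := by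
  rw [← hν.map_boolT_nhds hm, eventually_map]
  filter_upwards [hT.fT_apply_momGenT hν, hT.cT_apply_momGenT hμ hν, hT'.rinv_apply,
    hBP.1.eventuallyEq, hBP.2.eventuallyEq, hν.eventually_momGen_ne_zero]
    with w hf hc hinv hcR' hR' hM
  have hw : Rinv' (boolT ν w) = w := hR' ▸ hinv
  have hy : boolT ν w / (1 - boolT ν w) = momGenT ν w := by
    rw [boolT, momGenT]
    field_simp
    ring
  rw [fT, cT, hw, hy, hf, hc, hcR']
  exact ⟨rfl, rfl⟩

lemma eventuallyEq_of_fT_eventuallyEq (h : fT Rinv =ᶠ[𝓝 0] fT Rinv') (h0 : Rinv 0 = Rinv' 0) :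
    Rinv =ᶠ[𝓝 0] Rinv' := by
  refine eventuallyEq_nhds_of_eventuallyEq_nhdsNE ?_ h0
  filter_upwards [nhdsWithin_le_nhds h, self_mem_nhdsWithin] with y hy hy0
  rw [fT, fT, div_eq_mul_inv, div_eq_mul_inv] at hy
  exact inv_inj.1 (mul_left_cancel₀ hy0 hy)

lemma TransformData.momGen_eventuallyEq (hT : TransformData μ ν R Rinv cR)
    (hT' : TransformData μ' ν' R' Rinv' cR') (hν : Good ν) (hν' : Good ν')
    (hm : ∫ t, t ∂ν ≠ 0) (h : Rinv =ᶠ[𝓝 0] Rinv') : momGen ν =ᶠ[𝓝 0] momGen ν' := by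
  have hsurj : ∀ᶠ y in 𝓝 0, ∃ u, momGenT ν u = y ∧ Rinv y = u * momGen ν u := by
    rw [← hν.map_momGenT_nhds hm, eventually_map]
    filter_upwards [hT.rinv_apply_momGenT hν] with u hu using ⟨u, rfl, hu⟩
  filter_upwards [hT'.rinv_apply_momGenT hν', hν'.tendsto_momGenT.eventually (hsurj.and h),
    hν'.eventually_momGen_ne_zero] with z hz ⟨⟨u, hu, hRu⟩, hRR⟩ hM
  -- with `y = M̃_ν' z = M̃_ν u`: `Rinv y = u (1 + y)` and `Rinv' y = z (1 + y)`
  have hMu : momGen ν u = momGen ν' z := sub_left_inj.1 hu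
  obtain rfl : u = z := mul_right_cancel₀ hM (by rw [← hMu, ← hRu, hRR, hz, hMu])
  exact hMu

lemma momGen_eventuallyEq_of_boolT [IsProbabilityMeasure μ] [IsProbabilityMeasure μ']
    (h : boolT μ =ᶠ[𝓝[≠] 0] boolT μ') : momGen μ =ᶠ[𝓝 0] momGen μ' :=
  eventuallyEq_nhds_of_eventuallyEq_nhdsNE
    (h.mono fun _ hz => inv_inj.1 (sub_right_inj.1 hz)) (by rw [momGen_zero, momGen_zero])

lemma TransformData.eq_of_transforms_eventuallyEq (hT : TransformData μ ν R Rinv cR)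
    (hT' : TransformData μ' ν' R' Rinv' cR') (hμ : Good μ) (hν : Good ν) (hμ' : Good μ')
    (hν' : Good ν') (hm : ∫ t, t ∂ν ≠ 0) (hf : fT Rinv =ᶠ[𝓝 0] fT Rinv')
    (hc : cT cR Rinv =ᶠ[𝓝 0] cT cR' Rinv') : μ = μ' ∧ ν = ν' := by
  have hRinv := eventuallyEq_of_fT_eventuallyEq hf (by rw [hT.rinv_zero hν, hT'.rinv_zero hν'])
  obtain rfl : ν = ν' :=
    hν.ext_of_momGen_eventuallyEq hν' (hT.momGen_eventuallyEq hT' hν hν' hm hRinv)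
  have := hμ.1
  have := hμ'.1
  refine ⟨hμ.ext_of_momGen_eventuallyEq hμ' (momGen_eventuallyEq_of_boolT ?_), rfl⟩
  filter_upwards [nhdsWithin_le_nhds (hT.cT_apply_momGenT hμ hν),
    nhdsWithin_le_nhds (hT'.cT_apply_momGenT hμ' hν),
    nhdsWithin_le_nhds (hν.tendsto_momGenT.eventually hc), self_mem_nhdsWithin]
    with z h h' hcz hz
  rw [← div_left_inj' hz, ← h, ← h', hcz]

end BercoviciPata

/-- The Boolean-to-c-free Bercovici–Pata bijection is a homomorphism with respect to
multiplicative c-free convolution: `BP((μ₁,ν₁) ⊠_c (μ₂,ν₂)) = BP(μ₁,ν₁) ⊠_c BP(μ₂,ν₂)`. -/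
theorem BP_multiplicative_homomorphism
    (μ₁ ν₁ μ₂ ν₂ μ₃ ν₃ μ₁' ν₁' μ₂' ν₂' μ₃' ν₃' σ τ : Measure ℝ)
    (hgood : Good μ₁ ∧ Good ν₁ ∧ Good μ₂ ∧ Good ν₂ ∧ Good μ₃ ∧ Good ν₃ ∧
      Good μ₁' ∧ Good ν₁' ∧ Good μ₂' ∧ Good ν₂' ∧ Good μ₃' ∧ Good ν₃' ∧ Good σ ∧ Good τ)
    (hmean : (∫ t : ℝ, t ∂ν₁) ≠ 0 ∧ (∫ t : ℝ, t ∂ν₂) ≠ 0 ∧ (∫ t : ℝ, t ∂ν₃) ≠ 0 ∧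
      (∫ t : ℝ, t ∂ν₁') ≠ 0 ∧ (∫ t : ℝ, t ∂ν₂') ≠ 0 ∧ (∫ t : ℝ, t ∂ν₃') ≠ 0 ∧
      (∫ t : ℝ, t ∂τ) ≠ 0)
    (R₁ Rinv₁ cR₁ R₂ Rinv₂ cR₂ R₃ Rinv₃ cR₃ : ℂ → ℂ)
    (R₁' Rinv₁' cR₁' R₂' Rinv₂' cR₂' R₃' Rinv₃' cR₃' Rσ Rinvσ cRσ : ℂ → ℂ)
    (hT₁ : TransformData μ₁ ν₁ R₁ Rinv₁ cR₁)
    (hT₂ : TransformData μ₂ ν₂ R₂ Rinv₂ cR₂)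
    (hT₃ : TransformData μ₃ ν₃ R₃ Rinv₃ cR₃)
    (hT₁' : TransformData μ₁' ν₁' R₁' Rinv₁' cR₁')
    (hT₂' : TransformData μ₂' ν₂' R₂' Rinv₂' cR₂')
    (hT₃' : TransformData μ₃' ν₃' R₃' Rinv₃' cR₃')
    (hTσ : TransformData σ τ Rσ Rinvσ cRσ)
    -- `(μ₃,ν₃) = (μ₁,ν₁) ⊠_c (μ₂,ν₂)`
    (hprod : IsCProd cR₁ Rinv₁ cR₂ Rinv₂ cR₃ Rinv₃)
    -- `(μᵢ',νᵢ') = BP(μᵢ,νᵢ)` for `i = 1, 2, 3`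
    (hBP₁ : IsBP μ₁ ν₁ cR₁' R₁') (hBP₂ : IsBP μ₂ ν₂ cR₂' R₂') (hBP₃ : IsBP μ₃ ν₃ cR₃' R₃')
    -- `(σ,τ) = BP(μ₁,ν₁) ⊠_c BP(μ₂,ν₂)`
    (hprod' : IsCProd cR₁' Rinv₁' cR₂' Rinv₂' cRσ Rinvσ) :
    μ₃' = σ ∧ ν₃' = τ := by
  obtain ⟨hμ₁, hν₁, hμ₂, hν₂, hμ₃, hν₃, -, -, -, -, hμ₃', hν₃', hσ, hτ⟩ := hgood
  obtain ⟨hm₁, hm₂, hm₃, -, -, hm₃', -⟩ := hmean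
  have h₁ := hBP₁.eventually_transforms_eq hμ₁ hν₁ hm₁ hT₁ hT₁'
  have h₂ := hBP₂.eventually_transforms_eq hμ₂ hν₂ hm₂ hT₂ hT₂'
  have h₃ := hBP₃.eventually_transforms_eq hμ₃ hν₃ hm₃ hT₃ hT₃'
  have hx : Tendsto (fun y : ℂ => y / (1 - y)) (𝓝 0) (𝓝 0) := by
    have hc : ContinuousAt (fun y : ℂ => y / (1 - y)) 0 := by fun_prop (disch := norm_num)
    simpa using hc.tendsto
  refine hT₃'.eq_of_transforms_eventuallyEq hTσ hμ₃' hν₃' hσ hτ hm₃' ?_ ?_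
  · filter_upwards [hprod'.2.eventuallyEq, h₁, h₂, h₃, hx.eventually hprod.2.eventuallyEq]
      with y hσy h₁y h₂y h₃y hy
    rw [hσy, h₁y.1, h₂y.1, h₃y.1, hy]
  · filter_upwards [hprod'.1.eventuallyEq, h₁, h₂, h₃, hx.eventually hprod.1.eventuallyEq]
      with y hσy h₁y h₂y h₃y hy
    rw [hσy, h₁y.2, h₂y.2, h₃y.2, hy]
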